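/- Let h: 𝒳² → ℝ be symmetric, square-integrable, with Hoeffding decomposition h(x,x') = m_h + h⁽¹⁾(x) + h⁽¹⁾(x') + h⁽²⁾(x,x') where h⁽¹⁾(x) = E[h(x,X')] − m_h and h⁽²⁾(x,x') = h(x,x') − h⁽¹⁾(x) − h⁽¹⁾(x') − m_h. If the ranges of h⁽²⁾ and h⁽¹⁾ satisfy the degenerate structure above, and moreover Var(h⁽²⁾(X_1,X_2)) = 2·Var(h⁽¹⁾(X)) (as holds when h(x,x') = D(x,x')(Φ_𝒫(x,x') − Φ_{𝒫*}(x,x')) with E[h(X,x')²] ≤ E[D(X,x')²] and h⁽¹⁾ suitably controlled), then the U-statistic Λ_B over a block B of size |B| satisfies Var(Λ_B) ≤ (8/|B|)·Var(h⁽¹⁾(X)). -/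

import Mathlib

/-!
Write `c = 2 / (b (b - 1))` and `N = b (b - 1) / 2` for the number of pairs. Summing the
Hoeffding decomposition over the pairs `i < j` gives
`Σ h(Xᵢ, Xⱼ) = (b - 1) Σᵢ h⁽¹⁾(Xᵢ) + Σ h⁽²⁾(Xᵢ, Xⱼ) + N m_h`. All the summands on the right
are pairwise uncorrelated: in the product of two distinct ones some sample `X_c` occurs only once,
inside a factor `h⁽²⁾`, and `h⁽²⁾` integrates to zero in either argument. Hence
`Var(Λ_B) = c² ((b - 1)² b Var h⁽¹⁾ + N Var h⁽²⁾) = 4 Var h⁽¹⁾ / (b - 1) ≤ 8 Var h⁽¹⁾ / b`.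
-/

open MeasureTheory ProbabilityTheory Finset

theorem sum_filter_lt_add {ι M : Type*} [Fintype ι] [LinearOrder ι] [AddCommMonoid M]
    (f : ι → M) :
    ∑ p ∈ univ.filter (fun p : ι × ι => p.1 < p.2), (f p.1 + f p.2)
      = (Fintype.card ι - 1) • ∑ i, f i := by
  have hswap : ∑ p ∈ univ.filter (fun p : ι × ι => p.1 < p.2), f p.2
      = ∑ p ∈ univ.filter (fun p : ι × ι => p.2 < p.1), f p.1 :=
    sum_nbij' Prod.swap Prod.swap (by simp) (by simp) (by simp) (by simp) (by simp)
  rw [sum_add_distrib, hswap, ← sum_union (disjoint_filter.2 fun p _ h => h.asymm),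
    ← filter_or, smul_sum, ← univ_product_univ, sum_filter, sum_product]
  refine sum_congr rfl fun i _ => ?_
  rw [← sum_filter]
  simp [lt_or_lt_iff_ne, filter_ne, card_univ]

theorem card_filter_fst_lt_snd {ι : Type*} [Fintype ι] [LinearOrder ι] :
    (#(univ.filter fun p : ι × ι => p.1 < p.2) : ℝ)
      = Fintype.card ι * (Fintype.card ι - 1) / 2 := by
  rw [← univ_product_univ, card_product_filter_lt, card_univ, Nat.cast_choose_two]

section General

variable {Ω : Type*} [MeasurableSpace Ω] {μ : Measure Ω}

theorem sq_integral_le_integral_sq [IsProbabilityMeasure μ] {f : Ω → ℝ} (hf : MemLp f 2 μ) :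
    (∫ ω, f ω ∂μ) ^ 2 ≤ ∫ ω, f ω ^ 2 ∂μ := by
  have := variance_nonneg f μ
  rw [variance_eq_sub hf] at this
  simpa [sub_nonneg] using this

theorem memLp_two_integral_prod_right {α β : Type*} [MeasurableSpace α] [MeasurableSpace β]
    {ρ : Measure α} [SFinite ρ] {ν : Measure β} [IsProbabilityMeasure ν] {f : α × β → ℝ}
    (hf : MemLp f 2 (ρ.prod ν)) : MemLp (fun x => ∫ y, f (x, y) ∂ν) 2 ρ := by
  have hmeas := hf.aestronglyMeasurable.integral_prod_right'
  refine (memLp_two_iff_integrable_sq hmeas).2 <|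
    hf.integrable_sq.integral_prod_left.mono' (hmeas.pow 2) ?_
  filter_upwards [hf.aestronglyMeasurable.prodMk_left, hf.integrable_sq.prod_right_ae]
    with x hxm hxsq
  rw [Real.norm_eq_abs, abs_of_nonneg (sq_nonneg _)]
  exact sq_integral_le_integral_sq ((memLp_two_iff_integrable_sq hxm).2 hxsq)

theorem variance_fun_sum_of_covariance_eq_zero [IsFiniteMeasure μ] {ι : Type*}
    {s : Finset ι} {X : ι → Ω → ℝ} (hX : ∀ i ∈ s, MemLp (X i) 2 μ)
    (hcov : (s : Set ι).Pairwise fun i j => cov[X i, X j; μ] = 0) :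
    Var[fun ω => ∑ i ∈ s, X i ω; μ] = ∑ i ∈ s, Var[X i; μ] := by
  rw [variance_fun_sum' hX]
  refine sum_congr rfl fun i hi => ?_
  rw [sum_eq_single_of_mem i hi fun j hj hji => hcov hi hj hji.symm,
    covariance_self (hX i hi).aemeasurable]

theorem integral_mul_eq_zero_of_indepFun [IsProbabilityMeasure μ] {𝒲 𝒳 : Type*}
    [MeasurableSpace 𝒲] [MeasurableSpace 𝒳] {P : Measure 𝒳} [IsProbabilityMeasure P]
    {W : Ω → 𝒲} {Y : Ω → 𝒳} (hW : Measurable W) (hY : Measurable Y) (hWY : IndepFun W Y μ)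
    (hYlaw : μ.map Y = P) {φ : 𝒲 → 𝒳} {ψ : 𝒲 → ℝ} {g : 𝒳 → 𝒳 → ℝ}
    (hφ : Measurable φ) (hψ : Measurable ψ) (hg : Measurable (Function.uncurry g))
    (hdeg : ∀ᵐ w ∂(μ.map W), ∫ y, g (φ w) y ∂P = 0)
    (hint : Integrable (fun ω => ψ (W ω) * g (φ (W ω)) (Y ω)) μ) :
    ∫ ω, ψ (W ω) * g (φ (W ω)) (Y ω) ∂μ = 0 := by
  set F : 𝒲 × 𝒳 → ℝ := fun z => ψ z.1 * g (φ z.1) z.2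
  have hF : Measurable F :=
    (hψ.comp measurable_fst).mul (hg.comp ((hφ.comp measurable_fst).prodMk measurable_snd))
  have hWYm : AEMeasurable (fun ω => (W ω, Y ω)) μ := (hW.prodMk hY).aemeasurable
  have hlaw : μ.map (fun ω => (W ω, Y ω)) = (μ.map W).prod P := by
    rw [← hYlaw]
    exact (indepFun_iff_map_prod_eq_prod_map_map hW.aemeasurable hY.aemeasurable).1 hWY
  have hFint : Integrable F ((μ.map W).prod P) :=
    hlaw ▸ (integrable_map_measure hF.aestronglyMeasurable hWYm).2 hint
  change ∫ ω, F (W ω, Y ω) ∂μ = 0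
  rw [← integral_map hWYm hF.aestronglyMeasurable, hlaw, integral_prod F hFint]
  refine integral_eq_zero_of_ae ?_
  filter_upwards [hdeg] with w hw
  simp [F, integral_const_mul, hw]

end General

section Sample

variable {Ω 𝒳 ι : Type*} [MeasurableSpace Ω] [MeasurableSpace 𝒳] {μ : Measure Ω}
  [IsProbabilityMeasure μ] {P : Measure 𝒳} {X : ι → Ω → 𝒳}
  {g : 𝒳 → 𝒳 → ℝ}

theorem measurePreserving_prodMk_of_iIndepFun (hXm : ∀ i, Measurable (X i))
    (hindep : iIndepFun X μ) (hlaw : ∀ i, μ.map (X i) = P) {i j : ι} (hij : i ≠ j) :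
    MeasurePreserving (fun ω => (X i ω, X j ω)) μ (P.prod P) where
  measurable := (hXm i).prodMk (hXm j)
  map_eq := by
    rw [(indepFun_iff_map_prod_eq_prod_map_map (hXm i).aemeasurable
      (hXm j).aemeasurable).1 (hindep.indepFun hij), hlaw i, hlaw j]

theorem covariance_eq_zero_of_degenerate [IsProbabilityMeasure P] [Fintype ι] [DecidableEq ι]
    (hXm : ∀ i, Measurable (X i)) (hindep : iIndepFun X μ) (hlaw : ∀ i, μ.map (X i) = P)
    (hg : Measurable (Function.uncurry g)) (hdeg : ∀ᵐ x ∂P, ∫ y, g x y ∂P = 0)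
    {i j : ι} (hij : i ≠ j) {ψ : (({j}ᶜ : Finset ι) → 𝒳) → ℝ} (hψ : Measurable ψ)
    (hU : MemLp (fun ω => ψ fun m => X m ω) 2 μ)
    (hV : MemLp (fun ω => g (X i ω) (X j ω)) 2 μ) :
    cov[fun ω => ψ fun m => X m ω, fun ω => g (X i ω) (X j ω); μ] = 0 := by
  -- `ψ` sees every sample except `X j`, which therefore is independent of all the rest.
  set W : Ω → ({j}ᶜ : Finset ι) → 𝒳 := fun ω m => X m ω
  have hW : Measurable W := measurable_pi_lambda _ fun m => hXm m
  have hWj : IndepFun W (X j) μ :=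
    (hindep.indepFun_finset {j}ᶜ {j} disjoint_compl_left hXm).comp measurable_id
      (measurable_pi_apply (⟨j, mem_singleton_self j⟩ : ({j} : Finset ι)))
  set φ : (({j}ᶜ : Finset ι) → 𝒳) → 𝒳 := fun w => w ⟨i, by simpa using hij⟩
  have hφ : Measurable φ := measurable_pi_apply _
  have hdegW : ∀ᵐ w ∂(μ.map W), ∫ y, g (φ w) y ∂P = 0 := by
    refine ae_of_ae_map (μ := μ.map W) (p := fun x => ∫ y, g x y ∂P = 0) hφ.aemeasurable ?_
    rwa [Measure.map_map hφ hW, show φ ∘ W = X i from rfl, hlaw i]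
  have hmean : ∫ ω, g (X i ω) (X j ω) ∂μ = 0 := by
    simpa using integral_mul_eq_zero_of_indepFun hW (hXm j) hWj (hlaw j) hφ
      measurable_const hg hdegW (ψ := fun _ => 1) (by simpa using hV.integrable one_le_two)
  rw [covariance_eq_sub hU hV]
  simp only [Pi.mul_apply]
  rw [integral_mul_eq_zero_of_indepFun hW (hXm j) hWj (hlaw j) hφ hψ hg hdegW
    (hU.integrable_mul hV), hmean, mul_zero, sub_zero]

theorem covariance_kernel_eq_zero_of_ne [IsProbabilityMeasure P] [Fintype ι] [DecidableEq ι]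
    (hXm : ∀ i, Measurable (X i)) (hindep : iIndepFun X μ) (hlaw : ∀ i, μ.map (X i) = P)
    (hg : Measurable (Function.uncurry g)) (hgL2 : MemLp (Function.uncurry g) 2 (P.prod P))
    (hdeg : ∀ᵐ x ∂P, ∫ y, g x y ∂P = 0) {i j k l : ι} (hij : i ≠ j) (hkl : k ≠ l)
    (hkj : k ≠ j) (hlj : l ≠ j) :
    cov[fun ω => g (X k ω) (X l ω), fun ω => g (X i ω) (X j ω); μ] = 0 := by
  have hk : k ∈ ({j}ᶜ : Finset ι) := by simpa using hkj
  have hl : l ∈ ({j}ᶜ : Finset ι) := by simpa using hlj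
  exact covariance_eq_zero_of_degenerate hXm hindep hlaw hg hdeg hij
    (ψ := fun w => g (w ⟨k, hk⟩) (w ⟨l, hl⟩)) (by fun_prop)
    (hgL2.comp_measurePreserving (measurePreserving_prodMk_of_iIndepFun hXm hindep hlaw hkl))
    (hgL2.comp_measurePreserving (measurePreserving_prodMk_of_iIndepFun hXm hindep hlaw hij))

theorem covariance_comp_kernel_eq_zero_of_ne [IsProbabilityMeasure P] [Fintype ι]
    [DecidableEq ι] (hXm : ∀ i, Measurable (X i)) (hindep : iIndepFun X μ)
    (hlaw : ∀ i, μ.map (X i) = P) {f : 𝒳 → ℝ} (hf : Measurable f) (hfL2 : MemLp f 2 P)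
    (hg : Measurable (Function.uncurry g)) (hgL2 : MemLp (Function.uncurry g) 2 (P.prod P))
    (hdeg : ∀ᵐ x ∂P, ∫ y, g x y ∂P = 0) {i j k : ι} (hij : i ≠ j) (hkj : k ≠ j) :
    cov[fun ω => f (X k ω), fun ω => g (X i ω) (X j ω); μ] = 0 :=
  covariance_eq_zero_of_degenerate hXm hindep hlaw hg hdeg hij
    (ψ := fun w => f (w ⟨k, by simpa using hkj⟩)) (hf.comp (measurable_pi_apply _))
    (hfL2.comp_measurePreserving ⟨hXm k, hlaw k⟩)
    (hgL2.comp_measurePreserving (measurePreserving_prodMk_of_iIndepFun hXm hindep hlaw hij))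

variable [IsProbabilityMeasure P] [Fintype ι] [LinearOrder ι]

theorem covariance_kernel_pairs_eq_zero (hXm : ∀ i, Measurable (X i)) (hindep : iIndepFun X μ)
    (hlaw : ∀ i, μ.map (X i) = P) (hg : Measurable (Function.uncurry g))
    (hgL2 : MemLp (Function.uncurry g) 2 (P.prod P)) (hgsymm : ∀ x y, g x y = g y x)
    (hdeg : ∀ᵐ x ∂P, ∫ y, g x y ∂P = 0) {p q : ι × ι} (hp : p.1 < p.2) (hq : q.1 < q.2)
    (hpq : p ≠ q) :
    cov[fun ω => g (X p.1 ω) (X p.2 ω), fun ω => g (X q.1 ω) (X q.2 ω); μ] = 0 := by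
  -- As `p ≠ q`, `p.2` or `p.1` is not an entry of `q`; by symmetry of `g` it goes second.
  rw [covariance_comm]
  by_cases hp₂ : p.2 ≠ q.1 ∧ p.2 ≠ q.2
  · exact covariance_kernel_eq_zero_of_ne hXm hindep hlaw hg hgL2 hdeg hp.ne hq.ne
      hp₂.1.symm hp₂.2.symm
  · simp_rw [hgsymm (X p.1 _)]
    refine covariance_kernel_eq_zero_of_ne hXm hindep hlaw hg hgL2 hdeg hp.ne' hq.ne ?_ ?_ <;>
      grind [Prod.ext_iff]

theorem covariance_comp_kernel_pairs_eq_zero (hXm : ∀ i, Measurable (X i))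
    (hindep : iIndepFun X μ) (hlaw : ∀ i, μ.map (X i) = P) {f : 𝒳 → ℝ} (hf : Measurable f)
    (hfL2 : MemLp f 2 P) (hg : Measurable (Function.uncurry g))
    (hgL2 : MemLp (Function.uncurry g) 2 (P.prod P)) (hgsymm : ∀ x y, g x y = g y x)
    (hdeg : ∀ᵐ x ∂P, ∫ y, g x y ∂P = 0) (k : ι) {p : ι × ι} (hp : p.1 < p.2) :
    cov[fun ω => f (X k ω), fun ω => g (X p.1 ω) (X p.2 ω); μ] = 0 := by
  by_cases hk : k = p.2
  · simp_rw [hgsymm (X p.1 _)]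
    exact covariance_comp_kernel_eq_zero_of_ne hXm hindep hlaw hf hfL2 hg hgL2 hdeg hp.ne'
      (hk ▸ hp.ne')
  · exact covariance_comp_kernel_eq_zero_of_ne hXm hindep hlaw hf hfL2 hg hgL2 hdeg hp.ne hk

theorem variance_const_mul_sum_add_sum_pairs (hXm : ∀ i, Measurable (X i)) (hindep : iIndepFun X μ)
    (hlaw : ∀ i, μ.map (X i) = P) {f : 𝒳 → ℝ} (hf : Measurable f) (hfL2 : MemLp f 2 P)
    (hg : Measurable (Function.uncurry g)) (hgL2 : MemLp (Function.uncurry g) 2 (P.prod P))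
    (hgsymm : ∀ x y, g x y = g y x) (hdeg : ∀ᵐ x ∂P, ∫ y, g x y ∂P = 0) (a : ℝ) :
    Var[fun ω => a * ∑ i, f (X i ω) +
        ∑ p ∈ univ.filter (fun p : ι × ι => p.1 < p.2), g (X p.1 ω) (X p.2 ω); μ]
      = a ^ 2 * (Fintype.card ι * Var[f; P])
        + #(univ.filter fun p : ι × ι => p.1 < p.2) * Var[Function.uncurry g; P.prod P] := by
  set pairs := univ.filter fun p : ι × ι => p.1 < p.2
  have hlt {p} (hp : p ∈ pairs) : p.1 < p.2 := (mem_filter.1 hp).2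
  have hfX (i : ι) : MemLp (fun ω => f (X i ω)) 2 μ :=
    hfL2.comp_measurePreserving ⟨hXm i, hlaw i⟩
  have hgX {p} (hp : p ∈ pairs) : MemLp (fun ω => g (X p.1 ω) (X p.2 ω)) 2 μ :=
    hgL2.comp_measurePreserving
      (measurePreserving_prodMk_of_iIndepFun hXm hindep hlaw (hlt hp).ne)
  have hA : Var[fun ω => ∑ i, f (X i ω); μ] = Fintype.card ι * Var[f; P] := by
    rw [variance_fun_sum_of_covariance_eq_zero (fun i _ => hfX i)
      fun i _ j _ hij => ((hindep.indepFun hij).comp hf hf).covariance_eq_zero (hfX i) (hfX j)]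
    simp [MeasurePreserving.variance_fun_comp ⟨hXm _, hlaw _⟩ hf.aemeasurable]
  have hAZ : cov[fun ω => ∑ i, f (X i ω),
      fun ω => ∑ p ∈ pairs, g (X p.1 ω) (X p.2 ω); μ] = 0 := by
    rw [covariance_fun_sum_fun_sum' (fun i _ => hfX i) fun p hp => hgX hp]
    exact sum_eq_zero fun i _ => sum_eq_zero fun p hp => covariance_comp_kernel_pairs_eq_zero
      hXm hindep hlaw hf hfL2 hg hgL2 hgsymm hdeg i (hlt hp)
  have hZ : Var[fun ω => ∑ p ∈ pairs, g (X p.1 ω) (X p.2 ω); μ]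
      = #pairs * Var[Function.uncurry g; P.prod P] := by
    rw [variance_fun_sum_of_covariance_eq_zero (fun p hp => hgX hp)
      fun p hp q hq hpq => covariance_kernel_pairs_eq_zero hXm hindep hlaw hg hgL2 hgsymm hdeg
        (hlt hp) (hlt hq) hpq]
    calc ∑ p ∈ pairs, Var[fun ω => g (X p.1 ω) (X p.2 ω); μ]
        = ∑ _p ∈ pairs, Var[Function.uncurry g; P.prod P] :=
          sum_congr rfl fun p hp => (measurePreserving_prodMk_of_iIndepFun hXm hindep hlaw
            (hlt hp).ne).variance_fun_comp hg.aemeasurable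
      _ = #pairs * Var[Function.uncurry g; P.prod P] := by simp
  rw [variance_fun_add ((memLp_finsetSum _ fun i _ => hfX i).const_mul a)
    (memLp_finsetSum _ fun p hp => hgX hp), variance_const_mul, covariance_const_mul_left,
    hA, hAZ, hZ]
  ring

end Sample

theorem hoeffding₂_comm {𝒳 : Type*} {h h₂ : 𝒳 → 𝒳 → ℝ} {h₁ : 𝒳 → ℝ} {mh : ℝ}
    (hsymm : ∀ x y, h x y = h y x) (hh₂ : ∀ x y, h₂ x y = h x y - h₁ x - h₁ y - mh)
    (x y : 𝒳) : h₂ x y = h₂ y x := by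
  rw [hh₂, hh₂, hsymm]
  ring

theorem sum_filter_lt_eq_hoeffding {ι 𝒳 : Type*} [Fintype ι] [LinearOrder ι]
    {h h₂ : 𝒳 → 𝒳 → ℝ} {h₁ : 𝒳 → ℝ} {mh : ℝ} (hh₂ : ∀ x y, h₂ x y = h x y - h₁ x - h₁ y - mh)
    (x : ι → 𝒳) :
    ∑ p ∈ univ.filter (fun p : ι × ι => p.1 < p.2), h (x p.1) (x p.2)
      = (Fintype.card ι - 1 : ℕ) * ∑ i, h₁ (x i)
        + ∑ p ∈ univ.filter (fun p : ι × ι => p.1 < p.2), h₂ (x p.1) (x p.2)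
        + #(univ.filter fun p : ι × ι => p.1 < p.2) * mh := by
  have hsplit (p : ι × ι) :
      h (x p.1) (x p.2) = (h₁ (x p.1) + h₁ (x p.2)) + h₂ (x p.1) (x p.2) + mh := by
    rw [hh₂]; ring
  rw [sum_congr rfl fun p _ => hsplit p, sum_add_distrib, sum_add_distrib,
    sum_filter_lt_add (fun i => h₁ (x i)), sum_const, nsmul_eq_mul, nsmul_eq_mul]

section Hoeffding

variable {𝒳 : Type*} [MeasurableSpace 𝒳] {P : Measure 𝒳} [IsProbabilityMeasure P]
  {h : 𝒳 → 𝒳 → ℝ} {mh : ℝ} {h₁ : 𝒳 → ℝ} {h₂ : 𝒳 → 𝒳 → ℝ}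

theorem measurable_hoeffding₁ (hmeas : Measurable (Function.uncurry h))
    (hh₁ : ∀ x, h₁ x = (∫ y, h x y ∂P) - mh) : Measurable h₁ := by
  rw [funext hh₁]
  exact (hmeas.stronglyMeasurable.integral_prod_right (ν := P)).measurable.sub_const mh

theorem memLp_hoeffding₁ (hL2 : MemLp (Function.uncurry h) 2 (P.prod P))
    (hh₁ : ∀ x, h₁ x = (∫ y, h x y ∂P) - mh) : MemLp h₁ 2 P := by
  rw [funext hh₁]
  exact (memLp_two_integral_prod_right hL2).sub (memLp_const mh)

theorem integral_hoeffding₁_eq_zero (hint : Integrable (Function.uncurry h) (P.prod P))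
    (hmh : mh = ∫ z, h z.1 z.2 ∂(P.prod P)) (hh₁ : ∀ x, h₁ x = (∫ y, h x y ∂P) - mh) :
    ∫ x, h₁ x ∂P = 0 := by
  have hsec : Integrable (fun x => ∫ y, h x y ∂P) P := hint.integral_prod_left
  simp_rw [hh₁]
  rw [integral_sub hsec (integrable_const mh), integral_integral hint, hmh]
  simp

theorem measurable_hoeffding₂ (hmeas : Measurable (Function.uncurry h)) (hh₁m : Measurable h₁)
    (hh₂ : ∀ x y, h₂ x y = h x y - h₁ x - h₁ y - mh) : Measurable (Function.uncurry h₂) := by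
  have : Function.uncurry h₂ = fun z => h z.1 z.2 - h₁ z.1 - h₁ z.2 - mh :=
    funext fun z => hh₂ z.1 z.2
  rw [this]
  fun_prop

theorem memLp_hoeffding₂ (hL2 : MemLp (Function.uncurry h) 2 (P.prod P)) (hh₁L2 : MemLp h₁ 2 P)
    (hh₂ : ∀ x y, h₂ x y = h x y - h₁ x - h₁ y - mh) :
    MemLp (Function.uncurry h₂) 2 (P.prod P) := by
  have : Function.uncurry h₂ = fun z => h z.1 z.2 - h₁ z.1 - h₁ z.2 - mh :=
    funext fun z => hh₂ z.1 z.2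
  rw [this]
  exact ((hL2.sub (hh₁L2.comp_measurePreserving measurePreserving_fst)).sub
    (hh₁L2.comp_measurePreserving measurePreserving_snd)).sub (memLp_const mh)

theorem ae_integral_hoeffding₂_right_eq_zero (hint : Integrable (Function.uncurry h) (P.prod P))
    (hh₁int : Integrable h₁ P) (hh₁mean : ∫ x, h₁ x ∂P = 0)
    (hh₁ : ∀ x, h₁ x = (∫ y, h x y ∂P) - mh) (hh₂ : ∀ x y, h₂ x y = h x y - h₁ x - h₁ y - mh) :
    ∀ᵐ x ∂P, ∫ y, h₂ x y ∂P = 0 := by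
  filter_upwards [hint.prod_right_ae] with x hx
  replace hx : Integrable (fun y => h x y) P := hx
  simp_rw [hh₂]
  rw [integral_sub (by fun_prop) (by fun_prop), integral_sub (by fun_prop) hh₁int,
    integral_sub hx (by fun_prop), hh₁mean, hh₁ x]
  simp

end Hoeffding

/-- Key variance computation for fast clustering rates: if `h` is symmetric,
square-integrable, with Hoeffding decomposition `h = m_h + h¹(x) + h¹(x') + h²(x,x')`
and `Var(h²(X₁,X₂)) = 2 Var(h¹(X))`, then the `U`-statistic `Λ_B` over a block `B` of
size `|B|` satisfies `Var(Λ_B) ≤ (8/|B|) Var(h¹(X))`. -/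
theorem variance_block_Ustat_le_of_hoeffding
    {𝒳 Ω : Type*} [MeasurableSpace 𝒳] [MeasurableSpace Ω]
    (P : Measure 𝒳) [IsProbabilityMeasure P]
    (μ : Measure Ω) [IsProbabilityMeasure μ]
    (h : 𝒳 → 𝒳 → ℝ) (hmeas : Measurable (Function.uncurry h))
    (hsymm : ∀ x y, h x y = h y x)
    (hL2 : MemLp (fun z : 𝒳 × 𝒳 => h z.1 z.2) 2 (P.prod P))
    (mh : ℝ) (hmh : mh = ∫ z, h z.1 z.2 ∂(P.prod P))
    (h₁ : 𝒳 → ℝ) (hh₁ : ∀ x, h₁ x = (∫ y, h x y ∂P) - mh)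
    (h₂ : 𝒳 → 𝒳 → ℝ) (hh₂ : ∀ x y, h₂ x y = h x y - h₁ x - h₁ y - mh)
    (hvar : variance (fun z : 𝒳 × 𝒳 => h₂ z.1 z.2) (P.prod P) = 2 * variance h₁ P)
    (b : ℕ) (hb : 2 ≤ b)
    (X : Fin b → Ω → 𝒳) (hXm : ∀ i, Measurable (X i))
    (hindep : iIndepFun X μ)
    (hlaw : ∀ i, μ.map (X i) = P) :
    variance (fun ω => (2 / ((b : ℝ) * (b - 1))) *
        ∑ q ∈ Finset.univ.filter (fun q : Fin b × Fin b => q.1 < q.2),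
          h (X q.1 ω) (X q.2 ω)) μ
      ≤ (8 / (b : ℝ)) * variance h₁ P := by
  have hint : Integrable (Function.uncurry h) (P.prod P) := hL2.integrable one_le_two
  have hh₁m := measurable_hoeffding₁ hmeas hh₁
  have hh₁L2 := memLp_hoeffding₁ hL2 hh₁
  have hh₂m := measurable_hoeffding₂ hmeas hh₁m hh₂
  have hdeg := ae_integral_hoeffding₂_right_eq_zero hint (hh₁L2.integrable one_le_two)
    (integral_hoeffding₁_eq_zero hint hmh hh₁) hh₁ hh₂
  have hdecomp (ω : Ω) := sum_filter_lt_eq_hoeffding hh₂ fun i => X i ω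
  simp_rw [hdecomp, Fintype.card_fin]
  rw [variance_const_mul, variance_add_const (by fun_prop),
    variance_const_mul_sum_add_sum_pairs hXm hindep hlaw hh₁m hh₁L2 hh₂m
      (memLp_hoeffding₂ hL2 hh₁L2 hh₂) (hoeffding₂_comm hsymm hh₂) hdeg,
    show Var[Function.uncurry h₂; P.prod P] = 2 * Var[h₁; P] from hvar, Fintype.card_fin,
    card_filter_fst_lt_snd, Fintype.card_fin, Nat.cast_sub (by omega : 1 ≤ b), Nat.cast_one]
  have hb₂ : (2 : ℝ) ≤ b := by exact_mod_cast hb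
  calc (2 / (b * (b - 1))) ^ 2 * ((b - 1) ^ 2 * (b * Var[h₁; P])
          + b * (b - 1) / 2 * (2 * Var[h₁; P]))
      = 4 / (b - 1) * Var[h₁; P] := by
        field_simp [show (b : ℝ) - 1 ≠ 0 by linarith]
        ring
    _ ≤ 8 / b * Var[h₁; P] := by
        gcongr ?_ * _
        · exact variance_nonneg _ _
        · rw [div_le_div_iff₀ (by linarith) (by linarith)]
          linarith
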